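/- arXiv:1701.01669 — 3 statements merged into one kernel-verified Lean document; each statement's English description precedes it below -/
import Mathlib

section
/- The pair of functions x(t) = exp(-(r+q)t + (q/p)(1 - e^{-pt})) · (1 + r ∫₀ᵗ exp((r+q)τ - (q/p)(1 - e^{-pτ})) dτ) together with y(t) = -x'(t)/q solves the system x' = -q y, y' = p e^{-pt} x + (q e^{-pt} - q - r) y with x(0) = 1, y(0) = 0. -/
/-!
With `A t = (r + q) t - (q / p) (1 - e^{-pt})` and `a = A' = r + q - q e^{-pt}`, the formula for `x`
is the variation-of-constants solution of the linear equation `x' = -a x + r` with `x 0 = 1`.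
Then `y = -x' / q = (a x - r) / q`, and differentiating once more with `a' = p q e^{-pt}` gives
`y' = p e^{-pt} x - a y`, which is the second equation.
-/

open Real intervalIntegral

theorem hasDerivAt_exp_neg_mul_integral_exp {A a : ℝ → ℝ} (hA : ∀ t, HasDerivAt A (a t) t)
    (c r t : ℝ) :
    HasDerivAt (fun t => exp (-A t) * (c + r * ∫ τ in (0:ℝ)..t, exp (A τ)))
      (-a t * (exp (-A t) * (c + r * ∫ τ in (0:ℝ)..t, exp (A τ))) + r) t := by
  have hcont : Continuous fun τ => exp (A τ) :=
    continuous_exp.comp (continuous_iff_continuousAt.2 fun τ => (hA τ).continuousAt)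
  have hint : HasDerivAt (fun t => ∫ τ in (0:ℝ)..t, exp (A τ)) (exp (A t)) t :=
    integral_hasDerivAt_right (hcont.intervalIntegrable _ _)
      (hcont.stronglyMeasurableAtFilter _ _) hcont.continuousAt
  have hcancel : exp (-A t) * exp (A t) = 1 := by rw [← exp_add]; simp
  refine ((hA t).neg.exp).mul ((hint.const_mul r).const_add c) |>.congr_deriv ?_
  linear_combination r * hcancel

theorem hasDerivAt_const_sub_mul_exp_neg_mul (c p q t : ℝ) :
    HasDerivAt (fun t => c - q * exp (-p * t)) (p * q * exp (-p * t)) t :=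
  ((((hasDerivAt_id' t).const_mul (-p)).exp).const_mul q).const_sub c |>.congr_deriv (by ring)

theorem hasDerivAt_mul_sub_div_mul_one_sub_exp {p : ℝ} (hp : p ≠ 0) (q r t : ℝ) :
    HasDerivAt (fun t => (r + q) * t - q / p * (1 - exp (-p * t)))
      (r + q - q * exp (-p * t)) t := by
  refine ((hasDerivAt_id' t).const_mul (r + q)).sub
    (((((hasDerivAt_id' t).const_mul (-p)).exp).const_sub 1).const_mul (q / p)) |>.congr_deriv ?_
  field_simp

theorem hasDerivAt_neg_deriv_div {x a b : ℝ → ℝ} {r : ℝ}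
    (hx : ∀ t, HasDerivAt x (-a t * x t + r) t) (ha : ∀ t, HasDerivAt a (b t) t) (q t : ℝ) :
    HasDerivAt (fun t => -deriv x t / q) (b t * x t / q - a t * (-deriv x t / q)) t := by
  have hxy : (fun t => -deriv x t / q) = fun t => (a t * x t - r) / q :=
    funext fun t => by rw [(hx t).deriv]; ring
  rw [hxy, (hx t).deriv]
  refine (((ha t).mul (hx t)).sub_const r).div_const q |>.congr_deriv ?_
  ring

theorem stmt_4_general (p q r : ℝ) (hp : 0 < p) (hq : 0 < q)
    (x y : ℝ → ℝ)
    (hx : ∀ t, x t = Real.exp (-(r + q) * t + (q / p) * (1 - Real.exp (-p * t))) *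
        (1 + r * ∫ τ in (0:ℝ)..t,
          Real.exp ((r + q) * τ - (q / p) * (1 - Real.exp (-p * τ)))))
    (hy : ∀ t, y t = -(deriv x t) / q) :
    x 0 = 1 ∧ y 0 = 0 ∧
    (∀ t, HasDerivAt x (-q * y t) t) ∧
    (∀ t, HasDerivAt y
      (p * Real.exp (-p * t) * x t + (q * Real.exp (-p * t) - q - r) * y t) t) := by
  set A : ℝ → ℝ := fun t => (r + q) * t - q / p * (1 - exp (-p * t))
  set a : ℝ → ℝ := fun t => r + q - q * exp (-p * t)
  have hxA : x = fun t => exp (-A t) * (1 + r * ∫ τ in (0:ℝ)..t, exp (A τ)) := by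
    funext t
    rw [hx]
    congr 2
    ring
  have hx' : ∀ t, HasDerivAt x (-a t * x t + r) t := by
    rw [hxA]
    exact hasDerivAt_exp_neg_mul_integral_exp
      (hasDerivAt_mul_sub_div_mul_one_sub_exp hp.ne' q r) 1 r
  have hderiv : ∀ t, deriv x t = -q * y t := fun t => by
    rw [hy]
    field_simp
  have hy' : y = fun t => -deriv x t / q := funext hy
  refine ⟨by simp [hxA, A], ?_, fun t => hderiv t ▸ (hx' t).differentiableAt.hasDerivAt,
    fun t => ?_⟩
  · rw [hy, (hx' 0).deriv, hxA]
    simp [a, A]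
  · have h := hasDerivAt_neg_deriv_div hx'
      (fun t => hasDerivAt_const_sub_mul_exp_neg_mul (r + q) p q t) q t
    rw [← hy', ← hy t] at h
    refine h.congr_deriv ?_
    simp only [a]
    field_simp
    ring

theorem stmt_4 (p q r : ℝ) (hp : 0 < p) (hq : 0 < q) (hr : 0 < r)
    (x y : ℝ → ℝ)
    (hx : ∀ t, x t = Real.exp (-(r + q) * t + (q / p) * (1 - Real.exp (-p * t))) *
        (1 + r * ∫ τ in (0:ℝ)..t,
          Real.exp ((r + q) * τ - (q / p) * (1 - Real.exp (-p * τ)))))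
    (hy : ∀ t, y t = -(deriv x t) / q) :
    x 0 = 1 ∧ y 0 = 0 ∧
    (∀ t, HasDerivAt x (-q * y t) t) ∧
    (∀ t, HasDerivAt y
      (p * Real.exp (-p * t) * x t + (q * Real.exp (-p * t) - q - r) * y t) t) :=
  stmt_4_general p q r hp hq x y hx hy
end

section
/- If x, y solve x' = -q y, y' = p e^{-pt} x + (q e^{-pt} - q - r) y with x(0) = 1, y(0) = 0, then x satisfies the first-order linear ODE x' = -(r+q)x + q e^{-pt} x + r. -/
/-! Differentiating `x' = -q y` and substituting `y'` shows `x'' = ((q e - (r + q)) x)'` with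
`e t = exp (-p t)`, so `x' - (q e - (r + q)) x` is constant; at `t = 0` it equals `r`. -/

open Real

theorem first_integral_of_hasDerivAt {x y e e' : ℝ → ℝ} {q c : ℝ}
    (hx : ∀ t, HasDerivAt x (-q * y t) t) (he : ∀ t, HasDerivAt e (e' t) t)
    (hy : ∀ t, HasDerivAt y (-e' t * x t + (q * e t - c) * y t) t) (t : ℝ) :
    -q * y t + c * x t - q * e t * x t = -q * y 0 + c * x 0 - q * e 0 * x 0 := by
  have hF : ∀ t, HasDerivAt (fun t => -q * y t + c * x t - q * e t * x t) 0 t := fun t =>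
    ((((hy t).const_mul (-q)).add ((hx t).const_mul c)).sub
      (((he t).const_mul q).mul (hx t))).congr_deriv (by ring)
  exact is_const_of_deriv_eq_zero (fun t => (hF t).differentiableAt) (fun t => (hF t).deriv) t 0

theorem hasDerivAt_exp_neg_mul (p t : ℝ) :
    HasDerivAt (fun s => exp (-p * s)) (-p * exp (-p * t)) t := by
  simpa [mul_comm] using ((hasDerivAt_id t).const_mul (-p)).exp

theorem stmt_5_general (p q r : ℝ)
    (x y : ℝ → ℝ)
    (hx : ∀ t, HasDerivAt x (-q * y t) t)
    (hy : ∀ t, HasDerivAt y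
      (p * Real.exp (-p * t) * x t + (q * Real.exp (-p * t) - q - r) * y t) t)
    (hx0 : x 0 = 1) (hy0 : y 0 = 0) :
    ∀ t, HasDerivAt x (-(r + q) * x t + q * Real.exp (-p * t) * x t + r) t := by
  intro t
  have hy' : ∀ t, HasDerivAt y
      (-(-p * exp (-p * t)) * x t + (q * exp (-p * t) - (r + q)) * y t) t :=
    fun t => (hy t).congr_deriv (by ring)
  have hconst := first_integral_of_hasDerivAt hx (hasDerivAt_exp_neg_mul p) hy' t
  simp only [hx0, hy0, mul_zero, exp_zero, mul_one] at hconst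
  exact (hx t).congr_deriv (by linarith)

theorem stmt_5 (p q r : ℝ) (hp : 0 < p) (hq : 0 < q) (hr : 0 < r)
    (x y : ℝ → ℝ)
    (hx : ∀ t, HasDerivAt x (-q * y t) t)
    (hy : ∀ t, HasDerivAt y
      (p * Real.exp (-p * t) * x t + (q * Real.exp (-p * t) - q - r) * y t) t)
    (hx0 : x 0 = 1) (hy0 : y 0 = 0) :
    ∀ t, HasDerivAt x (-(r + q) * x t + q * Real.exp (-p * t) * x t + r) t :=
  stmt_5_general p q r x y hx hy hx0 hy0
end

section
/- The two expressions for the one-sided 1D adoption curve are equal: for all t ≥ 0, 1 - e^{-(r+q+p)t + (q/p)(1 - e^{-pt})} (1 + r ∫₀ᵗ e^{(r+q)τ - (q/p)(1 - e^{-pτ})} dτ) = 1 - e^{-pt} + e^{-pt - g(t)} q ∫₀ᵗ e^{-r(t-τ)} e^{g(τ)} (1 - e^{-pτ}) dτ, where g(t) = qt - (q/p)(1 - e^{-pt}). -/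
/-!
With `G τ = r τ + g τ` one has `G' = r + q (1 - e^{-pτ})` and `G 0 = 0`, so the fundamental theorem
of calculus gives `e^{G t} = 1 + r ∫₀ᵗ e^G + q ∫₀ᵗ e^G (1 - e^{-pτ})`. The left-hand side is
`1 - e^{-pt - G t} (1 + r ∫₀ᵗ e^G)`; substituting this identity for `1 + r ∫₀ᵗ e^G` turns it into
the right-hand side, since `e^{-r(t-τ)} e^{g τ} = e^{-rt} e^{G τ}`.
-/

open Real intervalIntegral

/-- The exponent `G τ = r τ + g τ`. -/
noncomputable def bassExponent (p q r τ : ℝ) : ℝ :=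
  (r + q) * τ - q / p * (1 - exp (-p * τ))

lemma hasDerivAt_bassExponent {p : ℝ} (hp : p ≠ 0) (q r τ : ℝ) :
    HasDerivAt (bassExponent p q r) (r + q * (1 - exp (-p * τ))) τ := by
  have hexp : HasDerivAt (fun s => exp (-p * s)) (exp (-p * τ) * -p) τ := by
    simpa [mul_comm] using ((hasDerivAt_id τ).const_mul (-p)).exp
  show HasDerivAt (fun s => (r + q) * s - q / p * (1 - exp (-p * s))) _ τ
  refine (((hasDerivAt_id' τ).const_mul (r + q)).sub
    (((hasDerivAt_const τ 1).sub hexp).const_mul (q / p))).congr_deriv ?_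
  field_simp
  ring

lemma integral_exp_comp_mul_deriv {G G' : ℝ → ℝ} {a b : ℝ} (hG : ∀ x, HasDerivAt G (G' x) x)
    (hG' : Continuous G') : ∫ x in a..b, exp (G x) * G' x = exp (G b) - exp (G a) :=
  integral_deriv_comp_mul_deriv (fun x _ => hG x) (fun x _ => hasDerivAt_exp (G x))
    hG'.continuousOn continuous_exp

lemma exp_bassExponent {p : ℝ} (hp : p ≠ 0) (q r t : ℝ) :
    exp (bassExponent p q r t) = 1 + r * (∫ τ in (0:ℝ)..t, exp (bassExponent p q r τ)) +
      q * ∫ τ in (0:ℝ)..t, exp (bassExponent p q r τ) * (1 - exp (-p * τ)) := by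
  have hcont : Continuous fun τ => exp (bassExponent p q r τ) := by
    unfold bassExponent
    fun_prop
  have hFTC := integral_exp_comp_mul_deriv (a := 0) (b := t)
    (hasDerivAt_bassExponent hp q r) (by fun_prop)
  have hsplit : ∀ τ, exp (bassExponent p q r τ) * (r + q * (1 - exp (-p * τ))) =
      r * exp (bassExponent p q r τ) + q * (exp (bassExponent p q r τ) * (1 - exp (-p * τ))) :=
    fun τ => by ring
  have h0 : bassExponent p q r 0 = 0 := by simp [bassExponent]
  rw [integral_congr fun τ _ => hsplit τ, integral_add ((hcont.const_mul r).intervalIntegrable _ _)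
    (Continuous.intervalIntegrable (by fun_prop) _ _), integral_const_mul, integral_const_mul, h0,
    exp_zero] at hFTC
  linarith

theorem stmt_6_general (p q r : ℝ) (hp : 0 < p)
    (g : ℝ → ℝ) (hg : ∀ t, g t = q * t - (q / p) * (1 - Real.exp (-p * t))) :
    ∀ t, 0 ≤ t →
      1 - Real.exp (-(r + q + p) * t + (q / p) * (1 - Real.exp (-p * t))) *
          (1 + r * ∫ τ in (0:ℝ)..t,
            Real.exp ((r + q) * τ - (q / p) * (1 - Real.exp (-p * τ)))) =
      1 - Real.exp (-p * t) + Real.exp (-p * t - g t) * q *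
          ∫ τ in (0:ℝ)..t,
            Real.exp (-r * (t - τ)) * Real.exp (g τ) * (1 - Real.exp (-p * τ)) := by
  intro t _
  have hexpG := exp_bassExponent hp.ne' q r t
  have hconv : ∫ τ in (0:ℝ)..t, exp (-r * (t - τ)) * exp (g τ) * (1 - exp (-p * τ)) =
      exp (-r * t) * ∫ τ in (0:ℝ)..t, exp (bassExponent p q r τ) * (1 - exp (-p * τ)) := by
    rw [← integral_const_mul]
    refine integral_congr fun τ _ => ?_
    rw [hg, bassExponent, ← mul_assoc, ← exp_add, ← exp_add]
    ring_nf
  have hcancel : exp (-(r + q + p) * t + q / p * (1 - exp (-p * t))) *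
      exp (bassExponent p q r t) = exp (-p * t) := by
    rw [bassExponent, ← exp_add]
    ring_nf
  have hfactor : exp (-(r + q + p) * t + q / p * (1 - exp (-p * t))) =
      exp (-p * t - g t) * exp (-r * t) := by
    rw [hg, ← exp_add]
    ring_nf
  rw [hconv]
  simp only [← bassExponent.eq_1]
  linear_combination exp (-(r + q + p) * t + q / p * (1 - exp (-p * t))) * hexpG - hcancel +
    q * (∫ τ in (0:ℝ)..t, exp (bassExponent p q r τ) * (1 - exp (-p * τ))) * hfactor

theorem stmt_6 (p q r : ℝ) (hp : 0 < p) (hq : 0 < q) (hr : 0 < r)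
    (g : ℝ → ℝ) (hg : ∀ t, g t = q * t - (q / p) * (1 - Real.exp (-p * t))) :
    ∀ t, 0 ≤ t →
      1 - Real.exp (-(r + q + p) * t + (q / p) * (1 - Real.exp (-p * t))) *
          (1 + r * ∫ τ in (0:ℝ)..t,
            Real.exp ((r + q) * τ - (q / p) * (1 - Real.exp (-p * τ)))) =
      1 - Real.exp (-p * t) + Real.exp (-p * t - g t) * q *
          ∫ τ in (0:ℝ)..t,
            Real.exp (-r * (t - τ)) * Real.exp (g τ) * (1 - Real.exp (-p * τ)) :=
  stmt_6_general p q r hp g hg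
end
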